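/- With γ₂ = ∑_{x=1}^∞ [ (1/x² + 2·ln x / x) − ln(x·(x+1))·ln((x+1)/x) ] and γ₂′ = ∑_{x=2}^∞ [ ln(x·(x−1))·ln(x/(x−1)) − (2·ln x / x − 1/x²) ], one has γ₂ + γ₂′ = 2·(∑_{x=1}^∞ 1/x²) − 1. -/

import Mathlib

open Real Filter Topology

/-! Writing `F = (log ·)²`, both summands split as `1/x² + (F'(x) - ΔF(x))` and
`1/(x+1)² + (ΔF(x) - F'(x+1))`, where `ΔF(x) = F(x+1) - F(x)` is the exact forward difference.
The error terms are `O(log x / x²)`, hence summable, and together they telescope to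
`F'(1) = 0`; what remains is `∑ 1/x² + ∑_{x ≥ 2} 1/x²`. -/

namespace Real

lemma log_mul_mul_log_div {a b : ℝ} (ha : 0 < a) (hb : 0 < b) :
    log (a * b) * log (b / a) = log b ^ 2 - log a ^ 2 := by
  rw [log_mul ha.ne' hb.ne', log_div hb.ne' ha.ne']
  ring

lemma inv_add_one_le_log_add_one_sub_log {x : ℝ} (hx : 0 < x) :
    (x + 1)⁻¹ ≤ log (x + 1) - log x := by
  have h := one_sub_inv_le_log_of_pos (div_pos (by linarith : 0 < x + 1) hx)
  rw [log_div (by linarith) hx.ne', inv_div] at h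
  field_simp at h ⊢
  linarith

lemma log_add_one_sub_log_le_inv {x : ℝ} (hx : 0 < x) :
    log (x + 1) - log x ≤ x⁻¹ := by
  have h := log_le_sub_one_of_pos (div_pos (by linarith : 0 < x + 1) hx)
  rw [log_div (by linarith) hx.ne'] at h
  field_simp at h ⊢
  linarith

end Real

section LogIncrement

/-! Here `u` plays the role of `log x` and `d` that of `log (x + 1) - log x`. -/

variable {x u d : ℝ}

lemma abs_two_mul_div_sub_le (hx : 1 ≤ x) (hu : 0 ≤ u) (hd₁ : (x + 1)⁻¹ ≤ d)
    (hd₂ : d ≤ x⁻¹) : |2 * u / x - (2 * u + d) * d| ≤ (2 * u + 1) / x ^ 2 := by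
  have hx₀ : 0 < x := by linarith
  have hdx : d * x ≤ 1 := by simpa [hx₀.ne'] using mul_le_mul_of_nonneg_right hd₂ hx₀.le
  have hdx₁ : 1 ≤ d * (x + 1) := by
    simpa [(by linarith : x + 1 ≠ 0)] using
      mul_le_mul_of_nonneg_right hd₁ (by linarith : 0 ≤ x + 1)
  have h : (2 * u / x - (2 * u + d) * d) * x ^ 2 = 2 * u * x * (1 - d * x) - (d * x) ^ 2 := by
    field_simp
    ring
  rw [le_div_iff₀ (by positivity), ← abs_of_nonneg (sq_nonneg x), ← abs_mul, h, abs_le]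
  constructor
  · nlinarith [mul_nonneg (mul_nonneg hu hx₀.le) (sub_nonneg.2 hdx),
      mul_le_mul hdx hdx (by nlinarith) zero_le_one]
  · nlinarith [mul_nonneg hu (sub_nonneg.2 hdx₁), sq_nonneg (d * x)]

lemma abs_sub_two_mul_add_div_le (hx : 1 ≤ x) (hu : 0 ≤ u) (hd₁ : (x + 1)⁻¹ ≤ d)
    (hd₂ : d ≤ x⁻¹) : |(2 * u + d) * d - 2 * (u + d) / (x + 1)| ≤ (2 * u + 1) / x ^ 2 := by
  have hx₀ : 0 < x := by linarith
  have hdx : d * x ≤ 1 := by simpa [hx₀.ne'] using mul_le_mul_of_nonneg_right hd₂ hx₀.le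
  have hdx₁ : 1 ≤ d * (x + 1) := by
    simpa [(by linarith : x + 1 ≠ 0)] using
      mul_le_mul_of_nonneg_right hd₁ (by linarith : 0 ≤ x + 1)
  have hd₀ : 0 ≤ d := by nlinarith
  have h : ((2 * u + d) * d - 2 * (u + d) / (x + 1)) * x ^ 2 =
      (2 * u * x ^ 2 * (d * (x + 1) - 1) + d * x ^ 2 * (d * (x + 1) - 2)) / (x + 1) := by
    field_simp
    ring
  rw [le_div_iff₀ (by positivity), ← abs_of_nonneg (sq_nonneg x), ← abs_mul, h, abs_le,
    le_div_iff₀ (by linarith), div_le_iff₀ (by linarith)]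
  constructor
  · nlinarith [mul_nonneg (mul_nonneg hu (sq_nonneg x)) (sub_nonneg.2 hdx₁),
      mul_le_mul_of_nonneg_left hdx hx₀.le]
  · nlinarith [mul_nonneg (mul_nonneg hu hx₀.le) (sub_nonneg.2 hdx),
      mul_nonneg (mul_nonneg hd₀ (sq_nonneg x)) (by nlinarith : 0 ≤ 2 - d * (x + 1))]

end LogIncrement

noncomputable def logSqDeriv (x : ℝ) : ℝ := 2 * log x / x

noncomputable def logSqDiff (x : ℝ) : ℝ := log (x + 1) ^ 2 - log x ^ 2

lemma logSqDiff_eq (x : ℝ) :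
    logSqDiff x = (2 * log x + (log (x + 1) - log x)) * (log (x + 1) - log x) := by
  rw [logSqDiff]
  ring

section LogSq

variable {x : ℝ}

lemma abs_logSqDeriv_sub_logSqDiff_le (hx : 1 ≤ x) :
    |logSqDeriv x - logSqDiff x| ≤ (2 * log x + 1) / x ^ 2 := by
  rw [logSqDeriv, logSqDiff_eq]
  exact abs_two_mul_div_sub_le hx (log_nonneg hx)
    (inv_add_one_le_log_add_one_sub_log (by linarith)) (log_add_one_sub_log_le_inv (by linarith))

lemma abs_logSqDiff_sub_logSqDeriv_add_one_le (hx : 1 ≤ x) :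
    |logSqDiff x - logSqDeriv (x + 1)| ≤ (2 * log x + 1) / x ^ 2 := by
  have h := abs_sub_two_mul_add_div_le hx (log_nonneg hx)
    (inv_add_one_le_log_add_one_sub_log (by linarith)) (log_add_one_sub_log_le_inv (by linarith))
  rwa [add_sub_cancel, ← logSqDiff_eq] at h

lemma tendsto_logSqDeriv_atTop : Tendsto logSqDeriv atTop (𝓝 0) := by
  have h := isLittleO_log_id_atTop.tendsto_div_nhds_zero.const_mul 2
  rw [mul_zero] at h
  exact h.congr fun x => by rw [logSqDeriv, mul_div_assoc, id]

end LogSq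

lemma summable_two_mul_log_add_one_div_sq :
    Summable fun n : ℕ => (2 * log ((n : ℝ) + 1) + 1) / ((n : ℝ) + 1) ^ 2 := by
  have hrpow : Summable fun n : ℕ => 5 * ((n : ℝ) + 1) ^ (-3 / 2 : ℝ) := by
    refine Summable.mul_left 5 ?_
    exact_mod_cast (summable_nat_add_iff 1).2
      (summable_nat_rpow.2 (by norm_num : (-3 / 2 : ℝ) < -1))
  have hy : ∀ n : ℕ, 1 ≤ (n : ℝ) + 1 := fun n => by simp
  refine hrpow.of_nonneg_of_le
    (fun n => div_nonneg (by linarith [log_nonneg (hy n)]) (by positivity)) fun n => ?_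
  have hlog : log ((n : ℝ) + 1) ≤ 2 * ((n : ℝ) + 1) ^ (1 / 2 : ℝ) := by
    simpa [div_div_eq_mul_div, mul_comm] using log_le_rpow_div (by positivity) one_half_pos
  have hsqrt : 1 ≤ ((n : ℝ) + 1) ^ (1 / 2 : ℝ) := one_le_rpow (hy n) (by norm_num)
  have hpow :
      ((n : ℝ) + 1) ^ (-3 / 2 : ℝ) = ((n : ℝ) + 1) ^ (1 / 2 : ℝ) / ((n : ℝ) + 1) ^ 2 := by
    rw [← rpow_natCast, ← rpow_sub (by positivity)]
    norm_num
  rw [hpow, mul_div_assoc']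
  gcongr
  linarith

lemma tsum_sub_succ_of_tendsto {G : Type*} [AddCommGroup G] [TopologicalSpace G]
    [IsTopologicalAddGroup G] [T2Space G] {f : ℕ → G} {l : G}
    (hs : Summable fun n => f n - f (n + 1)) (hf : Tendsto f atTop (𝓝 l)) :
    ∑' n, (f n - f (n + 1)) = f 0 - l := by
  refine tendsto_nhds_unique hs.hasSum.tendsto_sum_nat ?_
  simp_rw [Finset.sum_range_sub']
  exact tendsto_const_nhds.sub hf

lemma summable_logSqDeriv_sub_logSqDiff :
    Summable fun n : ℕ => logSqDeriv ((n : ℝ) + 1) - logSqDiff ((n : ℝ) + 1) :=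
  summable_two_mul_log_add_one_div_sq.of_norm_bounded fun n =>
    abs_logSqDeriv_sub_logSqDiff_le (by simp)

lemma summable_logSqDiff_sub_logSqDeriv :
    Summable fun n : ℕ => logSqDiff ((n : ℝ) + 1) - logSqDeriv ((n : ℝ) + 2) := by
  refine summable_two_mul_log_add_one_div_sq.of_norm_bounded fun n => ?_
  rw [show (n : ℝ) + 2 = n + 1 + 1 by ring]
  exact abs_logSqDiff_sub_logSqDeriv_add_one_le (by simp)

lemma tsum_logSqDeriv_sub_logSqDiff_add_tsum_logSqDiff_sub_logSqDeriv :
    ∑' n : ℕ, (logSqDeriv ((n : ℝ) + 1) - logSqDiff ((n : ℝ) + 1)) +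
      ∑' n : ℕ, (logSqDiff ((n : ℝ) + 1) - logSqDeriv ((n : ℝ) + 2)) = 0 := by
  have hf : Tendsto (fun n : ℕ => logSqDeriv ((n : ℝ) + 1)) atTop (𝓝 0) :=
    tendsto_logSqDeriv_atTop.comp (tendsto_natCast_atTop_atTop.atTop_add tendsto_const_nhds)
  have hsum := summable_logSqDeriv_sub_logSqDiff.add summable_logSqDiff_sub_logSqDeriv
  have h := tsum_sub_succ_of_tendsto (hsum.congr fun n => by push_cast; ring_nf) hf
  rw [← summable_logSqDeriv_sub_logSqDiff.tsum_add summable_logSqDiff_sub_logSqDeriv]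
  push_cast at h
  simpa [logSqDeriv, add_assoc, one_add_one_eq_two] using h

lemma summable_one_div_add_one_sq : Summable fun n : ℕ => 1 / ((n : ℝ) + 1) ^ 2 := by
  exact_mod_cast (summable_nat_add_iff 1).2 (summable_one_div_nat_pow.2 one_lt_two)

lemma summable_one_div_add_two_sq : Summable fun n : ℕ => 1 / ((n : ℝ) + 2) ^ 2 := by
  simpa [add_assoc, one_add_one_eq_two] using (summable_nat_add_iff 1).2 summable_one_div_add_one_sq

lemma tsum_one_div_add_two_sq :
    ∑' n : ℕ, 1 / ((n : ℝ) + 2) ^ 2 = ∑' n : ℕ, 1 / ((n : ℝ) + 1) ^ 2 - 1 := by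
  rw [summable_one_div_add_one_sq.tsum_eq_zero_add]
  push_cast
  norm_num [add_assoc, one_add_one_eq_two]

/-- γ₂ + γ₂′ = 2·(∑_{x=1}^∞ 1/x²) − 1. -/
theorem gamma_two_add_gamma_two_prime (γ₂ γ₂' : ℝ)
    (hγ₂ : γ₂ = ∑' x : ℕ,
      ((1 / ((x : ℝ) + 1) ^ 2 + 2 * Real.log ((x : ℝ) + 1) / ((x : ℝ) + 1)) -
        Real.log (((x : ℝ) + 1) * ((x : ℝ) + 2)) *
          Real.log (((x : ℝ) + 2) / ((x : ℝ) + 1))))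
    (hγ₂' : γ₂' = ∑' x : ℕ,
      (Real.log (((x : ℝ) + 2) * ((x : ℝ) + 1)) *
          Real.log (((x : ℝ) + 2) / ((x : ℝ) + 1)) -
        (2 * Real.log ((x : ℝ) + 2) / ((x : ℝ) + 2) - 1 / ((x : ℝ) + 2) ^ 2))) :
    γ₂ + γ₂' = 2 * (∑' x : ℕ, 1 / ((x : ℝ) + 1) ^ 2) - 1 := by
  have hγ₂_eq : γ₂ = (∑' x : ℕ, 1 / ((x : ℝ) + 1) ^ 2) +
      ∑' x : ℕ, (logSqDeriv ((x : ℝ) + 1) - logSqDiff ((x : ℝ) + 1)) := by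
    rw [hγ₂, ← summable_one_div_add_one_sq.tsum_add summable_logSqDeriv_sub_logSqDiff]
    refine tsum_congr fun x => ?_
    rw [log_mul_mul_log_div (by positivity) (by positivity), logSqDeriv, logSqDiff]
    ring_nf
  have hγ₂'_eq : γ₂' = (∑' x : ℕ, 1 / ((x : ℝ) + 2) ^ 2) +
      ∑' x : ℕ, (logSqDiff ((x : ℝ) + 1) - logSqDeriv ((x : ℝ) + 2)) := by
    rw [hγ₂', ← summable_one_div_add_two_sq.tsum_add summable_logSqDiff_sub_logSqDeriv]
    refine tsum_congr fun x => ?_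
    rw [mul_comm ((x : ℝ) + 2), log_mul_mul_log_div (by positivity) (by positivity), logSqDeriv,
      logSqDiff]
    ring_nf
  linarith [tsum_logSqDeriv_sub_logSqDiff_add_tsum_logSqDiff_sub_logSqDeriv,
    tsum_one_div_add_two_sq]
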